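/- For 0 < α ≤ 1 and any integer r ≥ 1, the improper integral ∫_1^∞ ψ(u-α)(log u)^{r-1}/u² du satisfies the bound | ∫_1^∞ ψ(u-α)(log u)^{r-1}/u² du | ≤ (e/3)·((r-1)/2)^{r-1}·e^{-r}, where ψ(u) = u - ⌊u⌋ - 1/2 and 0^0 is interpreted as 1. -/

import Mathlib

open MeasureTheory

/-- The sawtooth function `ψ(u) = u - ⌊u⌋ - 1/2`. -/
noncomputable def saw (u : ℝ) : ℝ := u - ⌊u⌋ - 1/2

/-!
Let `P(t) = {t}({t} - 1)/2`, a continuous primitive of `ψ` with `|P| ≤ 1/8`. For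
`f(u) = (log u)^k / u²` with `k = r - 1`, integration by parts gives
`∫_1^∞ ψ(u - α) f = -P(1 - α) f(1) - ∫_1^∞ P(u - α) f'`, so the integral is at most
`(f(1) + ∫_1^∞ |f'|) / 8`. As `f` increases on `[1, M]` and decreases to `0` on `[M, ∞)`,
where `M = e^{k/2}`, its total variation is `∫_1^∞ |f'| = 2 f(M) - f(1)`. Hence the integral is
at most `f(M) / 4 = (k/2)^k e^{-k} / 4`, which is below `(e/3) (k/2)^k e^{-(k+1)}`.
-/

open Set Filter Topology

noncomputable def sawPrimitive (t : ℝ) : ℝ := Int.fract t * (Int.fract t - 1) / 2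

lemma saw_eq_fract_sub_half (t : ℝ) : saw t = Int.fract t - 1 / 2 := by
  rw [saw, Int.fract]

lemma abs_saw_le (t : ℝ) : |saw t| ≤ 1 / 2 := by
  rw [saw_eq_fract_sub_half, abs_le]
  constructor <;> linarith [Int.fract_nonneg t, Int.fract_lt_one t]

lemma measurable_saw : Measurable saw := by
  have : saw = fun t => Int.fract t - 1 / 2 := funext saw_eq_fract_sub_half
  exact this ▸ measurable_fract.sub_const _

lemma abs_sawPrimitive_le (t : ℝ) : |sawPrimitive t| ≤ 1 / 8 := by
  rw [sawPrimitive, abs_le]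
  constructor <;> nlinarith [Int.fract_nonneg t, Int.fract_lt_one t, sq_nonneg (Int.fract t - 1/2)]

lemma continuous_sawPrimitive : Continuous sawPrimitive :=
  ContinuousOn.comp_fract'' (f := fun x : ℝ => x * (x - 1) / 2) (by fun_prop) (by norm_num)

lemma hasDerivAt_sawPrimitive {t : ℝ} (ht : Int.fract t ≠ 0) :
    HasDerivAt sawPrimitive (saw t) t := by
  set n : ℝ := (⌊t⌋ : ℝ)
  have hnt : n < t := Int.floor_lt_self_iff.2 (Int.fract_ne_zero_iff.1 ht)
  have hpoly : HasDerivAt (fun s : ℝ => (s - n) * (s - n - 1) / 2) (saw t) t := by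
    refine ((((hasDerivAt_id t).sub_const n).mul
      (((hasDerivAt_id t).sub_const n).sub_const 1)).div_const 2).congr_deriv ?_
    rw [saw, id]
    ring
  refine hpoly.congr_of_eventuallyEq ?_
  filter_upwards [Ioo_mem_nhds hnt (Int.lt_floor_add_one t)] with s hs
  have hfloor : ⌊s⌋ = ⌊t⌋ := Int.floor_eq_iff.2 ⟨hs.1.le, hs.2⟩
  simp only [sawPrimitive, Int.fract, hfloor, n]

section SawIntegral

variable {f f' : ℝ → ℝ} {a : ℝ}

lemma integrableOn_saw_mul (α : ℝ) (hf : IntegrableOn f (Ioi a)) :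
    IntegrableOn (fun u => saw (u - α) * f u) (Ioi a) :=
  hf.bdd_mul (measurable_saw.comp (measurable_id.sub_const α)).aestronglyMeasurable
    (ae_of_all _ fun u => (abs_saw_le (u - α)).trans_eq rfl)

lemma integrableOn_sawPrimitive_mul (α : ℝ) (hf : IntegrableOn f (Ioi a)) :
    IntegrableOn (fun u => sawPrimitive (u - α) * f u) (Ioi a) :=
  hf.bdd_mul (continuous_sawPrimitive.comp (continuous_sub_right α)).aestronglyMeasurable
    (ae_of_all _ fun u => abs_sawPrimitive_le (u - α))

lemma integral_saw_mul_eq (α : ℝ) (hderiv : ∀ u ∈ Ici a, HasDerivAt f (f' u) u)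
    (hf : IntegrableOn f (Ioi a)) (hf' : IntegrableOn f' (Ioi a))
    (hlim : Tendsto f atTop (𝓝 0)) :
    ∫ u in Ioi a, saw (u - α) * f u =
      -(sawPrimitive (a - α) * f a) - ∫ u in Ioi a, sawPrimitive (u - α) * f' u := by
  set g := fun u => sawPrimitive (u - α) * f u
  have hint := (integrableOn_saw_mul α hf).add (integrableOn_sawPrimitive_mul α hf')
  have hjumps : {u : ℝ | Int.fract (u - α) = 0}.Countable := by
    refine (countable_range fun n : ℤ => (n : ℝ) + α).mono fun u hu => ?_
    obtain ⟨n, hn⟩ := Int.fract_eq_zero_iff.1 hu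
    exact ⟨n, by simp only [hn, sub_add_cancel]⟩
  have hftc : ∀ b ≥ a, ∫ u in a..b, (saw (u - α) * f u + sawPrimitive (u - α) * f' u) =
      g b - g a := fun b hb =>
    integral_eq_of_hasDerivAt_off_countable_of_le _ _ hb hjumps
      ((continuous_sawPrimitive.comp (continuous_sub_right α)).continuousOn.mul
        fun u hu => (hderiv u hu.1).continuousAt.continuousWithinAt)
      (fun u hu => ((hasDerivAt_sawPrimitive hu.2).comp_sub_const u α).mul (hderiv u hu.1.1.le))
      ((intervalIntegrable_iff_integrableOn_Ioc_of_le hb).2 (hint.mono_set Ioc_subset_Ioi_self))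
  have hg : Tendsto g atTop (𝓝 0) := by
    refine squeeze_zero_norm (fun u => ?_) (by simpa using hlim.norm)
    rw [norm_mul]
    exact mul_le_of_le_one_left (norm_nonneg _)
      ((abs_sawPrimitive_le (u - α)).trans (by norm_num))
  have hsum : ∫ u in Ioi a, (saw (u - α) * f u + sawPrimitive (u - α) * f' u) = -g a := by
    refine tendsto_nhds_unique (intervalIntegral_tendsto_integral_Ioi a hint tendsto_id) ?_
    rw [← zero_sub]
    refine (hg.sub_const (g a)).congr' ?_
    filter_upwards [eventually_ge_atTop a] with b hb
    exact (hftc b hb).symm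
  rw [integral_add (integrableOn_saw_mul α hf) (integrableOn_sawPrimitive_mul α hf')] at hsum
  linarith

lemma abs_integral_saw_mul_le (α : ℝ) (hderiv : ∀ u ∈ Ici a, HasDerivAt f (f' u) u)
    (hf : IntegrableOn f (Ioi a)) (hf' : IntegrableOn f' (Ioi a))
    (hlim : Tendsto f atTop (𝓝 0)) :
    |∫ u in Ioi a, saw (u - α) * f u| ≤ (|f a| + ∫ u in Ioi a, |f' u|) / 8 := by
  have hboundary : |sawPrimitive (a - α) * f a| ≤ |f a| / 8 := by
    rw [abs_mul]
    linarith [mul_le_mul_of_nonneg_right (abs_sawPrimitive_le (a - α)) (abs_nonneg (f a))]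
  have hbulk : |∫ u in Ioi a, sawPrimitive (u - α) * f' u| ≤ (∫ u in Ioi a, |f' u|) / 8 := by
    calc |∫ u in Ioi a, sawPrimitive (u - α) * f' u|
        ≤ ∫ u in Ioi a, |sawPrimitive (u - α) * f' u| := abs_integral_le_integral_abs
      _ ≤ ∫ u in Ioi a, |f' u| / 8 := by
          refine integral_mono (integrableOn_sawPrimitive_mul α hf').abs (hf'.abs.div_const 8)
            fun u => ?_
          rw [abs_mul]
          linarith [mul_le_mul_of_nonneg_right (abs_sawPrimitive_le (u - α)) (abs_nonneg (f' u))]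
      _ = (∫ u in Ioi a, |f' u|) / 8 := integral_div _ _
  rw [integral_saw_mul_eq α hderiv hf hf' hlim]
  calc _ ≤ |sawPrimitive (a - α) * f a| + |∫ u in Ioi a, sawPrimitive (u - α) * f' u| := by
        rw [← abs_neg (sawPrimitive (a - α) * f a)]
        exact abs_sub _ _
    _ ≤ _ := by linarith

end SawIntegral

section Unimodal

variable {f f' : ℝ → ℝ} {a M : ℝ}

lemma integrableOn_deriv_of_unimodal (haM : a ≤ M)
    (hderiv : ∀ u ∈ Ici a, HasDerivAt f (f' u) u)
    (hinc : ∀ u ∈ Ioo a M, 0 ≤ f' u) (hdec : ∀ u ∈ Ioi M, f' u ≤ 0)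
    (hlim : Tendsto f atTop (𝓝 0)) :
    IntegrableOn f' (Ioi a) := by
  rw [← Ioc_union_Ioi_eq_Ioi haM]
  exact (intervalIntegral.integrableOn_deriv_of_nonneg
      (fun u hu => (hderiv u hu.1).continuousAt.continuousWithinAt)
      (fun u hu => hderiv u hu.1.le) hinc).union
    (integrableOn_Ioi_deriv_of_nonpos' (fun u hu => hderiv u (haM.trans hu)) hdec hlim)

lemma integral_abs_deriv_of_unimodal (haM : a ≤ M)
    (hderiv : ∀ u ∈ Ici a, HasDerivAt f (f' u) u)
    (hinc : ∀ u ∈ Ioo a M, 0 ≤ f' u) (hdec : ∀ u ∈ Ioi M, f' u ≤ 0)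
    (hlim : Tendsto f atTop (𝓝 0)) :
    ∫ u in Ioi a, |f' u| = 2 * f M - f a := by
  have hf'int := integrableOn_deriv_of_unimodal haM hderiv hinc hdec hlim
  have hint : IntegrableOn (fun u => |f' u|) (Ioi a) := hf'int.abs
  have hrise : ∫ u in Ioc a M, |f' u| = f M - f a := by
    rw [integral_Ioc_eq_integral_Ioo,
      setIntegral_congr_fun measurableSet_Ioo fun u hu => abs_of_nonneg (hinc u hu),
      ← integral_Ioc_eq_integral_Ioo, ← intervalIntegral.integral_of_le haM]
    exact intervalIntegral.integral_eq_sub_of_hasDerivAt_of_le haM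
      (fun u hu => (hderiv u hu.1).continuousAt.continuousWithinAt)
      (fun u hu => hderiv u hu.1.le)
      ((intervalIntegrable_iff_integrableOn_Ioc_of_le haM).2 (hf'int.mono_set Ioc_subset_Ioi_self))
  have hfall : ∫ u in Ioi M, |f' u| = f M := by
    rw [setIntegral_congr_fun measurableSet_Ioi fun u hu => abs_of_nonpos (hdec u hu),
      integral_neg, integral_Ioi_of_hasDerivAt_of_nonpos'
        (fun u hu => hderiv u (haM.trans hu)) hdec hlim]
    ring
  rw [← Ioc_union_Ioi_eq_Ioi haM, setIntegral_union (Ioc_disjoint_Ioi le_rfl) measurableSet_Ioi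
    (hint.mono_set Ioc_subset_Ioi_self) (hint.mono_set (Ioi_subset_Ioi haM)), hrise, hfall]
  ring

end Unimodal

section LogPowDivSq

open Real Asymptotics

variable (k : ℕ)

lemma hasDerivAt_log_pow_div_sq {u : ℝ} (hu : 0 < u) :
    HasDerivAt (fun u => log u ^ k / u ^ 2)
      ((k * log u ^ (k - 1) - 2 * log u ^ k) / u ^ 3) u := by
  have h := ((hasDerivAt_log hu.ne').pow k).div (hasDerivAt_pow 2 u) (pow_ne_zero 2 hu.ne')
  refine h.congr_deriv ?_
  simp only [Pi.pow_apply]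
  field_simp
  ring

lemma isLittleO_log_pow_div_sq :
    (fun u => log u ^ k / u ^ 2) =o[atTop] fun u => u ^ (-(3 / 2) : ℝ) := by
  have hlog : (fun u => log u ^ k) =o[atTop] fun u => u ^ (1 / 2 : ℝ) := by
    simpa only [rpow_natCast] using
      isLittleO_log_rpow_rpow_atTop (k : ℝ) (by norm_num : (0 : ℝ) < 1 / 2)
  refine (hlog.mul_isBigO (isBigO_refl (fun u : ℝ => (u ^ 2)⁻¹) atTop)).congr' ?_ ?_
  · exact Eventually.of_forall fun u => (div_eq_mul_inv _ _).symm
  · filter_upwards [eventually_gt_atTop 0] with u hu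
    rw [← rpow_natCast, ← rpow_neg hu.le, ← rpow_add hu]
    norm_num

lemma tendsto_log_pow_div_sq : Tendsto (fun u => log u ^ k / u ^ 2) atTop (𝓝 0) :=
  (isLittleO_log_pow_div_sq k).trans_tendsto (tendsto_rpow_neg_atTop (by norm_num))

lemma integrableOn_log_pow_div_sq : IntegrableOn (fun u => log u ^ k / u ^ 2) (Ioi 1) := by
  refine (LocallyIntegrableOn.integrableOn_of_isBigO_atTop ?_
    (isLittleO_log_pow_div_sq k).isBigO (integrableAtFilter_rpow_atTop_iff.2 (by norm_num))
    ).mono_set Ioi_subset_Ici_self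
  refine ContinuousOn.locallyIntegrableOn (fun u hu => ?_) measurableSet_Ici
  have hu : (0 : ℝ) < u := zero_lt_one.trans_le hu
  exact (hasDerivAt_log_pow_div_sq k hu).continuousAt.continuousWithinAt

lemma nat_mul_pow_pred_sub_two_mul_pow_nonneg {x : ℝ} (hx : 0 < x) (hxk : x ≤ k / 2) :
    0 ≤ k * x ^ (k - 1) - 2 * x ^ k := by
  cases k with
  | zero => norm_num at hxk; linarith
  | succ j =>
    have hfactor : ((j + 1 : ℕ) : ℝ) * x ^ (j + 1 - 1) - 2 * x ^ (j + 1) =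
        x ^ j * ((j + 1 : ℕ) - 2 * x) := by
      rw [Nat.add_sub_cancel]; ring
    rw [hfactor]
    exact mul_nonneg (pow_nonneg hx.le j) (by linarith)

lemma nat_mul_pow_pred_sub_two_mul_pow_nonpos {x : ℝ} (hx : 0 ≤ x) (hxk : k / 2 ≤ x) :
    k * x ^ (k - 1) - 2 * x ^ k ≤ 0 := by
  cases k with
  | zero => norm_num
  | succ j =>
    have hfactor : ((j + 1 : ℕ) : ℝ) * x ^ (j + 1 - 1) - 2 * x ^ (j + 1) =
        x ^ j * ((j + 1 : ℕ) - 2 * x) := by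
      rw [Nat.add_sub_cancel]; ring
    rw [hfactor]
    exact mul_nonpos_of_nonneg_of_nonpos (pow_nonneg hx j) (by linarith)

lemma abs_integral_saw_mul_log_pow_div_sq_le (α : ℝ) :
    |∫ u in Ioi 1, saw (u - α) * (log u ^ k / u ^ 2)| ≤ (k / 2) ^ k * exp (-k) / 4 := by
  set M := exp (k / 2)
  have hM : 1 ≤ M := one_le_exp (by positivity)
  have hderiv : ∀ u ∈ Ici (1 : ℝ), HasDerivAt (fun u => log u ^ k / u ^ 2)
      ((k * log u ^ (k - 1) - 2 * log u ^ k) / u ^ 3) u := fun u hu =>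
    hasDerivAt_log_pow_div_sq k (zero_lt_one.trans_le hu)
  have hinc : ∀ u ∈ Ioo 1 M, 0 ≤ (k * log u ^ (k - 1) - 2 * log u ^ k) / u ^ 3 := by
    intro u ⟨hu1, huM⟩
    have hu : 0 < u := zero_lt_one.trans hu1
    exact div_nonneg (nat_mul_pow_pred_sub_two_mul_pow_nonneg k (log_pos hu1)
      ((log_lt_iff_lt_exp hu).2 huM).le) (by positivity)
  have hdec : ∀ u ∈ Ioi M, (k * log u ^ (k - 1) - 2 * log u ^ k) / u ^ 3 ≤ 0 := by
    intro u huM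
    have hu : 1 < u := hM.trans_lt huM
    exact div_nonpos_of_nonpos_of_nonneg (nat_mul_pow_pred_sub_two_mul_pow_nonpos k
      (log_nonneg hu.le) ((lt_log_iff_exp_lt (by linarith)).2 huM).le) (by positivity)
  have hmax : log M ^ k / M ^ 2 = (k / 2) ^ k * exp (-k) := by
    rw [log_exp, ← exp_nat_mul, exp_neg, div_eq_mul_inv, Nat.cast_ofNat,
      mul_div_cancel₀ _ two_ne_zero]
  have hbound := abs_integral_saw_mul_le α hderiv (integrableOn_log_pow_div_sq k)
    (integrableOn_deriv_of_unimodal hM hderiv hinc hdec (tendsto_log_pow_div_sq k))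
    (tendsto_log_pow_div_sq k)
  rw [integral_abs_deriv_of_unimodal hM hderiv hinc hdec (tendsto_log_pow_div_sq k), hmax,
    abs_of_nonneg (by simp : (0 : ℝ) ≤ log 1 ^ k / 1 ^ 2)] at hbound
  linarith

end LogPowDivSq

theorem stmt19_general (α : ℝ) (r : ℕ) (hr : 1 ≤ r) :
    |∫ u in Set.Ioi (1 : ℝ), saw (u - α) * (Real.log u) ^ (r - 1) / u ^ 2| ≤
      (Real.exp 1 / 3) * (((r : ℝ) - 1) / 2) ^ (r - 1) * Real.exp (-(r : ℝ)) := by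
  have hbound := abs_integral_saw_mul_log_pow_div_sq_le (r - 1) α
  rw [Nat.cast_sub hr, Nat.cast_one] at hbound
  have hexp : Real.exp (-((r : ℝ) - 1)) = Real.exp 1 * Real.exp (-(r : ℝ)) := by
    rw [← Real.exp_add]; ring_nf
  have hr' : (0 : ℝ) ≤ (r : ℝ) - 1 := by rw [sub_nonneg]; exact_mod_cast hr
  have hpos : 0 ≤ (((r : ℝ) - 1) / 2) ^ (r - 1) * Real.exp 1 * Real.exp (-(r : ℝ)) := by
    positivity
  simp_rw [mul_div_assoc]
  rw [hexp] at hbound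
  linarith

/-- for `0 < α ≤ 1` and `r ≥ 1`,
`|∫_1^∞ ψ(u-α)(log u)^{r-1}/u² du| ≤ (e/3)·((r-1)/2)^{r-1}·e^{-r}` (with `0^0 = 1`). -/
theorem stmt19 (α : ℝ) (hα : 0 < α) (hα1 : α ≤ 1) (r : ℕ) (hr : 1 ≤ r) :
    |∫ u in Set.Ioi (1 : ℝ), saw (u - α) * (Real.log u) ^ (r - 1) / u ^ 2| ≤
      (Real.exp 1 / 3) * (((r : ℝ) - 1) / 2) ^ (r - 1) * Real.exp (-(r : ℝ)) :=
  stmt19_general α r hr
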